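/- Let v₁,…,v_{n−1} : S¹ → ℂ \ {0} be smooth curves (critical values of the loop of polynomials g_t). If d/dt arg v_q(t) ≠ 0 for all q and all t, then (∂g/∂u, ∂(arg g)/∂t) ≠ (0,0) at every point (u, t) ∈ (ℂ × S¹) with g(u,t) ≠ 0. -/

import Mathlib

/-! At a critical point `c_p(t)` of `g_t`, the chain rule gives
`d/dt v_p(t) = ∂g/∂u · c_p'(t) + ∂g/∂t = ∂g/∂t (c_p(t), t)`, so `∂(arg g)/∂t` at `(c_p(t), t)` equals
`Im (v_p'/v_p) ≠ 0`. -/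

open ContinuousLinearMap

theorem deriv_comp_prodMk_eq_of_hasFDerivAt_zero {𝕜 E F : Type*} [NontriviallyNormedField 𝕜]
    [NormedAddCommGroup E] [NormedSpace 𝕜 E] [NormedAddCommGroup F] [NormedSpace 𝕜 F]
    {G : E × 𝕜 → F} {c : 𝕜 → E} {t : 𝕜}
    (hG : DifferentiableAt 𝕜 G (c t, t)) (hc : DifferentiableAt 𝕜 c t)
    (hcrit : HasFDerivAt (fun u => G (u, t)) (0 : E →L[𝕜] F) (c t)) :
    deriv (fun s => G (c s, s)) t = deriv (fun s => G (c t, s)) t := by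
  set L := fderiv 𝕜 G (c t, t)
  have hinl : L.comp (inl 𝕜 E 𝕜) = 0 :=
    (hG.hasFDerivAt.comp (c t) (hasFDerivAt_prodMk_left (c t) t)).unique hcrit
  have hcurve : HasDerivAt (fun s => G (c s, s)) (L (deriv c t, 1)) t :=
    hG.hasFDerivAt.comp_hasDerivAt (f := fun s => (c s, s)) t
      (hc.hasDerivAt.prodMk (hasDerivAt_id t))
  have hslice : HasDerivAt (fun s => G (c t, s)) (L (0, 1)) t :=
    (hG.hasFDerivAt.comp t (hasFDerivAt_prodMk_right (c t) t)).hasDerivAt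
  have hL : L (deriv c t, 0) = 0 := by simpa using congr($hinl (deriv c t))
  rw [hcurve.deriv, hslice.deriv]
  calc L (deriv c t, 1) = L (deriv c t, 0) + L (0, 1) := by rw [← map_add, Prod.mk_add_mk]; simp
    _ = L (0, 1) := by rw [hL, zero_add]

theorem stmt14_general (n : ℕ) (z : Fin n → ℝ → ℂ)
    (hzdiff : ∀ j : Fin n, Differentiable ℝ (z j))
    (g : ℂ → ℝ → ℂ) (hg : g = fun u t => ∏ j : Fin n, (u - z j t))
    (c : Fin (n - 1) → ℝ → ℂ)
    (hcdiff : ∀ p : Fin (n - 1), Differentiable ℝ (c p))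
    (hc : ∀ t : ℝ, ∀ u : ℂ, deriv (fun u' => g u' t) u = 0 ↔ ∃ p, u = c p t)
    (v : Fin (n - 1) → ℝ → ℂ) (hv : v = fun p t => g (c p t) t)
    (hvarg : ∀ (p : Fin (n - 1)) (t : ℝ), (deriv (v p) t / v p t).im ≠ 0) :
    ∀ (u : ℂ) (t : ℝ), g u t ≠ 0 →
      (deriv (fun u' => g u' t) u, (deriv (fun t' => g u t') t / g u t).im) ≠
        ((0 : ℂ), (0 : ℝ)) := by
  intro u t _ hzero
  obtain ⟨hcrit, harg⟩ := Prod.mk_inj.mp hzero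
  obtain ⟨p, rfl⟩ := (hc t u).mp hcrit
  subst hg hv
  have hG : Differentiable ℝ fun q : ℂ × ℝ => ∏ j : Fin n, (q.1 - z j q.2) := by fun_prop
  have hslice : DifferentiableAt ℂ (fun u' => ∏ j : Fin n, (u' - z j t)) (c p t) := by fun_prop
  have hslice_real : HasFDerivAt (𝕜 := ℝ) (fun u' => ∏ j : Fin n, (u' - z j t)) 0 (c p t) := by
    have hslice_zero := hslice.hasDerivAt
    rw [hcrit] at hslice_zero
    simpa using hslice_zero.hasFDerivAt.restrictScalars ℝ
  refine hvarg p t ?_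
  rwa [deriv_comp_prodMk_eq_of_hasFDerivAt_zero (G := fun q => ∏ j : Fin n, (q.1 - z j q.2))
    (hG _) (hcdiff p t) hslice_real]

/-- If the critical values `v_p(t) = g_t(c_p(t))` of the loop of polynomials
`g(u,t) = ∏ⱼ (u − zⱼ(t))` satisfy `d/dt arg v_p(t) ≠ 0` for all `p` and `t`, then
`(∂g/∂u, ∂(arg g)/∂t) ≠ (0,0)` at every point `(u,t)` with `g(u,t) ≠ 0`, where
`∂(arg g)/∂t := Im((∂g/∂t)/g)`. -/
theorem stmt14 (n : ℕ) (z : Fin n → ℝ → ℂ)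
    (hzdiff : ∀ j : Fin n, Differentiable ℝ (z j))
    (hzdist : ∀ t : ℝ, ∀ i j : Fin n, i ≠ j → z i t ≠ z j t)
    (g : ℂ → ℝ → ℂ) (hg : g = fun u t => ∏ j : Fin n, (u - z j t))
    (c : Fin (n - 1) → ℝ → ℂ)
    (hcdiff : ∀ p : Fin (n - 1), Differentiable ℝ (c p))
    (hcdist : ∀ t : ℝ, ∀ p q : Fin (n - 1), p ≠ q → c p t ≠ c q t)
    (hc : ∀ t : ℝ, ∀ u : ℂ, deriv (fun u' => g u' t) u = 0 ↔ ∃ p, u = c p t)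
    (v : Fin (n - 1) → ℝ → ℂ) (hv : v = fun p t => g (c p t) t)
    (hv0 : ∀ p t, v p t ≠ 0)
    (hvarg : ∀ (p : Fin (n - 1)) (t : ℝ), (deriv (v p) t / v p t).im ≠ 0) :
    ∀ (u : ℂ) (t : ℝ), g u t ≠ 0 →
      (deriv (fun u' => g u' t) u, (deriv (fun t' => g u t') t / g u t).im) ≠
        ((0 : ℂ), (0 : ℝ)) :=
  stmt14_general n z hzdiff g hg c hcdiff hc v hv hvarg
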